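/- arXiv:1504.04149 — 2 statements merged into one kernel-verified Lean document; each statement's English description precedes it below -/
import Mathlib

section
/- Let $X:[0,\infty)\to\mathbb{R}$ be a continuous convex function with $X(0)=0$ and $0 \le \frac{X(t_2)-X(t_1)}{t_2-t_1} \le 1$ for all $0\le t_1 < t_2$. Then for every $v=(v_1,v_2)\in\mathbb{R}^2$ with $v_1 \ge v_2 \ge 0$ and $v\ne(0,0)$, there exists a unique $p\in[\max(v_1,v_2),\, v_1+v_2] = [v_1, v_1+v_2]$ such that $\frac{v_1}{p} + X\big(\frac{v_2}{p}\big) = 1$. -/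
/-!
Put `f p = v₁ / p + X (v₂ / p)`. The slope bounds make `X` monotone with `0 ≤ X t ≤ t`, so `f` is
continuous and strictly decreasing on `p > 0`, with `f v₁ = 1 + X (v₂ / v₁) ≥ 1` and
`f (v₁ + v₂) ≤ (v₁ + v₂) / (v₁ + v₂) = 1`. The intermediate value theorem gives a solution of
`f p = 1` in `[v₁, v₁ + v₂]`, and strict monotonicity makes it unique.
-/

open Set

theorem existsUnique_mem_Icc_eq_of_strictAntiOn {f : ℝ → ℝ} {a b c : ℝ} (hab : a ≤ b)
    (hf : ContinuousOn f (Icc a b)) (hanti : StrictAntiOn f (Icc a b))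
    (hb : f b ≤ c) (ha : c ≤ f a) :
    ∃! p, p ∈ Icc a b ∧ f p = c := by
  obtain ⟨p, hp, hfp⟩ := intermediate_value_Icc' hab hf ⟨hb, ha⟩
  exact ⟨p, ⟨hp, hfp⟩, fun q ⟨hq, hfq⟩ => hanti.injOn hq hp (hfq.trans hfp.symm)⟩

theorem monotoneOn_Ici_of_slope_nonneg {X : ℝ → ℝ} {a : ℝ}
    (hslope : ∀ t₁ t₂ : ℝ, a ≤ t₁ → t₁ < t₂ → 0 ≤ (X t₂ - X t₁) / (t₂ - t₁)) :
    MonotoneOn X (Ici a) := by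
  intro t₁ ht₁ t₂ _ h12
  rcases h12.eq_or_lt with rfl | hlt
  · exact le_rfl
  · have := hslope t₁ t₂ ht₁ hlt
    rw [div_nonneg_iff] at this
    rcases this with ⟨h, _⟩ | ⟨_, h⟩
    · linarith
    · linarith

theorem le_self_of_slope_le_one {X : ℝ → ℝ} (h0 : X 0 = 0)
    (hslope : ∀ t : ℝ, 0 < t → (X t - X 0) / (t - 0) ≤ 1) {t : ℝ} (ht : 0 ≤ t) :
    X t ≤ t := by
  rcases ht.eq_or_lt with rfl | hpos
  · exact h0.le
  · have := hslope t hpos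
    rw [h0, sub_zero, sub_zero, div_le_one hpos] at this
    exact this

theorem strictAntiOn_div_add_comp_div {X : ℝ → ℝ} (hX : MonotoneOn X (Ici 0)) {v₁ v₂ : ℝ}
    (hv₁ : 0 < v₁) (hv₂ : 0 ≤ v₂) :
    StrictAntiOn (fun p => v₁ / p + X (v₂ / p)) (Ioi 0) := by
  intro p hp q _ hpq
  have hq : 0 < q := lt_trans hp hpq
  have h₁ : v₁ / q < v₁ / p := div_lt_div_of_pos_left hv₁ hp hpq
  have h₂ : X (v₂ / q) ≤ X (v₂ / p) :=
    hX (div_nonneg hv₂ hq.le) (div_nonneg hv₂ (le_of_lt hp))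
      (div_le_div_of_nonneg_left hv₂ hp hpq.le)
  exact add_lt_add_of_lt_of_le h₁ h₂

theorem stmt1_general (X : ℝ → ℝ)
    (hcont : ContinuousOn X (Set.Ici 0))
    (h0 : X 0 = 0)
    (hslope : ∀ t₁ t₂ : ℝ, 0 ≤ t₁ → t₁ < t₂ →
      0 ≤ (X t₂ - X t₁) / (t₂ - t₁) ∧ (X t₂ - X t₁) / (t₂ - t₁) ≤ 1)
    (v₁ v₂ : ℝ) (h21 : v₂ ≤ v₁) (h2 : 0 ≤ v₂) (hne : ¬ (v₁ = 0 ∧ v₂ = 0)) :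
    ∃! p : ℝ, p ∈ Set.Icc (max v₁ v₂) (v₁ + v₂) ∧ v₁ / p + X (v₂ / p) = 1 := by
  have hv₁ : 0 < v₁ := (h2.trans h21).lt_of_ne fun h => hne ⟨h.symm, by linarith⟩
  have hmono : MonotoneOn X (Ici 0) :=
    monotoneOn_Ici_of_slope_nonneg fun t₁ t₂ h₁ h₁₂ => (hslope t₁ t₂ h₁ h₁₂).1
  have hle : ∀ {t : ℝ}, 0 ≤ t → X t ≤ t :=
    le_self_of_slope_le_one h0 fun t ht => (hslope 0 t le_rfl ht).2
  have hpos : Icc v₁ (v₁ + v₂) ⊆ Ioi 0 := fun p hp => hv₁.trans_le hp.1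
  have hcont_div : ∀ c : ℝ, ContinuousOn (fun p => c / p) (Icc v₁ (v₁ + v₂)) := fun _ =>
    continuousOn_const.div continuousOn_id fun p hp => (hpos hp).ne'
  rw [max_eq_left h21]
  refine existsUnique_mem_Icc_eq_of_strictAntiOn (by linarith) ?_
    ((strictAntiOn_div_add_comp_div hmono hv₁ h2).mono hpos) ?_ ?_
  · exact (hcont_div v₁).add (hcont.comp (hcont_div v₂) fun p hp => div_nonneg h2 (hpos hp).le)
  · calc v₁ / (v₁ + v₂) + X (v₂ / (v₁ + v₂))
        ≤ v₁ / (v₁ + v₂) + v₂ / (v₁ + v₂) := by gcongr; exact hle (by positivity)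
      _ = 1 := by rw [← add_div, div_self (by positivity)]
  · have hv : 0 ≤ v₂ / v₁ := div_nonneg h2 hv₁.le
    have hX : X 0 ≤ X (v₂ / v₁) := hmono (mem_Ici.2 le_rfl) hv hv
    rw [div_self hv₁.ne']
    linarith

/-- for a norm process path `X`, the equation `v₁/p + X (v₂/p) = 1`
has a unique solution `p ∈ [max v₁ v₂, v₁ + v₂] = [v₁, v₁+v₂]`. -/
theorem stmt1 (X : ℝ → ℝ)
    (hcont : ContinuousOn X (Set.Ici 0))
    (hconv : ConvexOn ℝ (Set.Ici 0) X)
    (h0 : X 0 = 0)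
    (hslope : ∀ t₁ t₂ : ℝ, 0 ≤ t₁ → t₁ < t₂ →
      0 ≤ (X t₂ - X t₁) / (t₂ - t₁) ∧ (X t₂ - X t₁) / (t₂ - t₁) ≤ 1)
    (v₁ v₂ : ℝ) (h21 : v₂ ≤ v₁) (h2 : 0 ≤ v₂) (hne : ¬ (v₁ = 0 ∧ v₂ = 0)) :
    ∃! p : ℝ, p ∈ Set.Icc (max v₁ v₂) (v₁ + v₂) ∧ v₁ / p + X (v₂ / p) = 1 :=
  stmt1_general X hcont h0 hslope v₁ v₂ h21 h2 hne
end

section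
/- Let $X:[0,\infty)\to\mathbb{R}$ be a continuous convex function with $X(0)=0$ and difference quotients in $[0,1]$, and let $p$ be defined on $\mathbb{R}^2_{+,\ge}$ as the unique solution in $[v_1,v_1+v_2]$ of $\frac{v_1}{p}+X(\frac{v_2}{p})=1$ (with $p(0)=0$). Then $p$ is subadditive: for all $v,w\in\mathbb{R}^2_{+,\ge}$, $p(v+w) \le p(v)+p(w)$. -/
/-!
Write `F_v(t) = v₁ / t + X (v₂ / t)`, so that `p v` is the root of `F_v = 1`. Since `X` is
nondecreasing, `F_v` is strictly decreasing in `t` as soon as `v₁ > 0`. Multiplying by `t` turns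
`F_v(t)` into `v₁ + t X (v₂ / t)`, whose second term is the perspective of `X` and hence jointly
convex in `(t, v₂)`; therefore `F_{v+w}(p v + p w) ≤ 1 = F_{v+w}(p (v + w))`, and monotonicity
gives `p (v + w) ≤ p v + p w`.
-/

open Set

lemma monotoneOn_Ici_of_div_sub_nonneg {f : ℝ → ℝ} {a : ℝ}
    (h : ∀ x y, a ≤ x → x < y → 0 ≤ (f y - f x) / (y - x)) : MonotoneOn f (Ici a) := by
  intro x hx y _ hxy
  rcases hxy.eq_or_lt with rfl | hlt
  · rfl
  · rw [← slope_nonneg_iff_of_le hxy, slope_def_field]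
    exact h x y hx hlt

lemma ConvexOn.perspective_add_le {E : Type*} [AddCommGroup E] [Module ℝ E] {s : Set E}
    {f : E → ℝ} (hf : ConvexOn ℝ s f) {a b : ℝ} (ha : 0 < a) (hb : 0 < b) {x y : E}
    (hx : a⁻¹ • x ∈ s) (hy : b⁻¹ • y ∈ s) :
    (a + b) * f ((a + b)⁻¹ • (x + y)) ≤ a * f (a⁻¹ • x) + b * f (b⁻¹ • y) := by
  have hab : 0 < a + b := add_pos ha hb
  have hpoint : (a / (a + b)) • a⁻¹ • x + (b / (a + b)) • b⁻¹ • y = (a + b)⁻¹ • (x + y) := by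
    have hca : a / (a + b) * a⁻¹ = (a + b)⁻¹ := by field_simp
    have hcb : b / (a + b) * b⁻¹ = (a + b)⁻¹ := by field_simp
    rw [smul_smul, smul_smul, hca, hcb, smul_add]
  have hconv := hf.2 hx hy (show 0 ≤ a / (a + b) by positivity)
    (show 0 ≤ b / (a + b) by positivity) (by field_simp)
  rw [hpoint, smul_eq_mul, smul_eq_mul] at hconv
  calc (a + b) * f ((a + b)⁻¹ • (x + y))
      ≤ (a + b) * (a / (a + b) * f (a⁻¹ • x) + b / (a + b) * f (b⁻¹ • y)) := by gcongr
    _ = a * f (a⁻¹ • x) + b * f (b⁻¹ • y) := by field_simp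

section LevelFunction

variable {X : ℝ → ℝ} {v₁ v₂ w₁ w₂ a b : ℝ}

lemma le_of_div_add_le_div_add (hX : MonotoneOn X (Ici 0)) (hv₁ : 0 < v₁) (hv₂ : 0 ≤ v₂)
    {q t : ℝ} (ht : 0 < t) (hle : v₁ / t + X (v₂ / t) ≤ v₁ / q + X (v₂ / q)) : q ≤ t := by
  by_contra! htq
  have hq : 0 < q := ht.trans htq
  have hfirst : v₁ / q < v₁ / t := div_lt_div_of_pos_left hv₁ ht htq
  have hsecond : X (v₂ / q) ≤ X (v₂ / t) :=
    hX (div_nonneg hv₂ hq.le) (div_nonneg hv₂ ht.le) (div_le_div_of_nonneg_left hv₂ ht htq.le)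
  linarith

lemma div_add_le_one_of_eq_one (hX : ConvexOn ℝ (Ici 0) X) (ha : 0 < a) (hb : 0 < b)
    (hv₂ : 0 ≤ v₂) (hw₂ : 0 ≤ w₂) (hv : v₁ / a + X (v₂ / a) = 1)
    (hw : w₁ / b + X (w₂ / b) = 1) :
    (v₁ + w₁) / (a + b) + X ((v₂ + w₂) / (a + b)) ≤ 1 := by
  have hab : 0 < a + b := add_pos ha hb
  have hpersp := hX.perspective_add_le ha hb (x := v₂) (y := w₂)
    (mem_Ici.2 (by positivity)) (mem_Ici.2 (by positivity))
  simp only [smul_eq_mul, inv_mul_eq_div] at hpersp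
  rw [div_add' _ _ _ hab.ne', div_le_one hab]
  have hva : v₁ + a * X (v₂ / a) = a := by
    rw [← mul_div_cancel₀ v₁ ha.ne', ← mul_add, hv, mul_one]
  have hwb : w₁ + b * X (w₂ / b) = b := by
    rw [← mul_div_cancel₀ w₁ hb.ne', ← mul_add, hw, mul_one]
  linarith

end LevelFunction

theorem stmt4_general (X : ℝ → ℝ)
    (hconv : ConvexOn ℝ (Set.Ici 0) X)
    (hslope : ∀ t₁ t₂ : ℝ, 0 ≤ t₁ → t₁ < t₂ →
      0 ≤ (X t₂ - X t₁) / (t₂ - t₁) ∧ (X t₂ - X t₁) / (t₂ - t₁) ≤ 1)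
    (p : ℝ → ℝ → ℝ) (hp0 : p 0 0 = 0)
    (hp : ∀ v₁ v₂ : ℝ, v₂ ≤ v₁ → 0 ≤ v₂ → ¬ (v₁ = 0 ∧ v₂ = 0) →
      p v₁ v₂ ∈ Set.Icc v₁ (v₁ + v₂) ∧ v₁ / p v₁ v₂ + X (v₂ / p v₁ v₂) = 1) :
    ∀ v₁ v₂ w₁ w₂ : ℝ, v₂ ≤ v₁ → 0 ≤ v₂ → w₂ ≤ w₁ → 0 ≤ w₂ →
      p (v₁ + w₁) (v₂ + w₂) ≤ p v₁ v₂ + p w₁ w₂ := by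
  intro v₁ v₂ w₁ w₂ hv hv₂ hw hw₂
  have hmono : MonotoneOn X (Ici 0) :=
    monotoneOn_Ici_of_div_sub_nonneg fun x y hx hxy ↦ (hslope x y hx hxy).1
  rcases (hv₂.trans hv).eq_or_lt with hv₁ | hv₁
  · obtain rfl : v₂ = 0 := le_antisymm (hv₁ ▸ hv) hv₂
    simp [← hv₁, hp0]
  rcases (hw₂.trans hw).eq_or_lt with hw₁ | hw₁
  · obtain rfl : w₂ = 0 := le_antisymm (hw₁ ▸ hw) hw₂
    simp [← hw₁, hp0]
  obtain ⟨⟨ha, -⟩, hva⟩ := hp v₁ v₂ hv hv₂ fun h ↦ hv₁.ne' h.1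
  obtain ⟨⟨hb, -⟩, hwb⟩ := hp w₁ w₂ hw hw₂ fun h ↦ hw₁.ne' h.1
  obtain ⟨-, hvw⟩ := hp (v₁ + w₁) (v₂ + w₂) (add_le_add hv hw) (add_nonneg hv₂ hw₂)
    fun h ↦ (add_pos hv₁ hw₁).ne' h.1
  refine le_of_div_add_le_div_add hmono (add_pos hv₁ hw₁) (add_nonneg hv₂ hw₂)
    (add_pos (hv₁.trans_le ha) (hw₁.trans_le hb)) ?_
  rw [hvw]
  exact div_add_le_one_of_eq_one hconv (hv₁.trans_le ha) (hw₁.trans_le hb) hv₂ hw₂ hva hwb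

/-- the function `p` induced on `ℝ²_{+,≥}` by a norm process path is
subadditive. -/
theorem stmt4 (X : ℝ → ℝ)
    (hcont : ContinuousOn X (Set.Ici 0))
    (hconv : ConvexOn ℝ (Set.Ici 0) X)
    (h0 : X 0 = 0)
    (hslope : ∀ t₁ t₂ : ℝ, 0 ≤ t₁ → t₁ < t₂ →
      0 ≤ (X t₂ - X t₁) / (t₂ - t₁) ∧ (X t₂ - X t₁) / (t₂ - t₁) ≤ 1)
    (p : ℝ → ℝ → ℝ) (hp0 : p 0 0 = 0)
    (hp : ∀ v₁ v₂ : ℝ, v₂ ≤ v₁ → 0 ≤ v₂ → ¬ (v₁ = 0 ∧ v₂ = 0) →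
      p v₁ v₂ ∈ Set.Icc v₁ (v₁ + v₂) ∧ v₁ / p v₁ v₂ + X (v₂ / p v₁ v₂) = 1) :
    ∀ v₁ v₂ w₁ w₂ : ℝ, v₂ ≤ v₁ → 0 ≤ v₂ → w₂ ≤ w₁ → 0 ≤ w₂ →
      p (v₁ + w₁) (v₂ + w₂) ≤ p v₁ v₂ + p w₁ w₂ :=
  stmt4_general X hconv hslope p hp0 hp
end
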